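/- Let H be a Hilbert space and let W₁, W₂ be self-adjoint involutions on H with ‖W₁ − W₂‖ ≤ 1. Let V_{+,i} denote the +1-eigenspace of W_i. Then the restriction F of the projection (I + W₁)/2 to V_{+,2}, viewed as a map F : V_{+,2} → V_{+,1}, is a bijective bounded linear map. -/

import Mathlib

/-- Let `H` be a Hilbert space and `W₁, W₂` self-adjoint involutions on `H` with
`‖W₁ - W₂‖ ≤ 1`.  Let `V₊ᵢ = ker(Wᵢ - 1)` be the `+1`-eigenspace of `Wᵢ`.  Then the
restriction `F` of the projection `(I + W₁)/2` to `V₊₂`, viewed as a map `F : V₊₂ → V₊₁`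
(its range indeed lies in `V₊₁`), is a bijective bounded linear map: it is injective on
`V₊₂` and onto `V₊₁`. -/
theorem proj_restriction_bijective
    {H : Type*} [NormedAddCommGroup H] [InnerProductSpace ℂ H] [CompleteSpace H]
    (W₁ W₂ : H →L[ℂ] H)
    (h₁sa : IsSelfAdjoint W₁) (h₂sa : IsSelfAdjoint W₂)
    (h₁inv : W₁ * W₁ = 1) (h₂inv : W₂ * W₂ = 1)
    (hnorm : ‖W₁ - W₂‖ ≤ 1) :
    (∀ v ∈ LinearMap.ker ((W₂ - 1 : H →L[ℂ] H) : H →ₗ[ℂ] H), ((2 : ℂ)⁻¹ • (1 + W₁)) v ∈ LinearMap.ker ((W₁ - 1 : H →L[ℂ] H) : H →ₗ[ℂ] H)) ∧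
    (∀ v ∈ LinearMap.ker ((W₂ - 1 : H →L[ℂ] H) : H →ₗ[ℂ] H), ((2 : ℂ)⁻¹ • (1 + W₁)) v = 0 → v = 0) ∧
    (∀ w ∈ LinearMap.ker ((W₁ - 1 : H →L[ℂ] H) : H →ₗ[ℂ] H), ∃ v ∈ LinearMap.ker ((W₂ - 1 : H →L[ℂ] H) : H →ₗ[ℂ] H),
      ((2 : ℂ)⁻¹ • (1 + W₁)) v = w) := by
  have hW₁sq : ∀ x : H, W₁ (W₁ x) = x := by
    intro x
    have := congrArg (fun T : H →L[ℂ] H => T x) h₁inv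
    simpa using this
  have hW₁iso : ∀ x : H, ‖W₁ x‖ = ‖x‖ := by
    intro x
    have hsym := h₁sa.isSymmetric
    have h1 : (inner ℂ (W₁ x) (W₁ x) : ℂ) = inner ℂ x x := by
      have h := hsym x (W₁ x)
      simp only [ContinuousLinearMap.coe_coe] at h
      rw [h, hW₁sq]
    have h3 : ‖W₁ x‖ ^ 2 = ‖x‖ ^ 2 := by
      have := congrArg (fun z : ℂ => RCLike.re z) h1
      simpa [inner_self_eq_norm_sq, ← Complex.ofReal_pow] using this
    exact (sq_eq_sq₀ (norm_nonneg _) (norm_nonneg _)).mp h3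
  refine ⟨?_, ?_, ?_⟩
  · intro v _
    simp only [LinearMap.mem_ker, ContinuousLinearMap.coe_coe,
      ContinuousLinearMap.sub_apply, ContinuousLinearMap.smul_apply,
      ContinuousLinearMap.add_apply, ContinuousLinearMap.one_apply,
      ContinuousLinearMap.map_smul, map_add, hW₁sq]
    module
  · intro v hv hF
    have hv' : W₂ v = v := by
      have : (W₂ - 1) v = 0 := hv
      simpa [sub_eq_zero, ContinuousLinearMap.sub_apply] using this
    have hW : W₁ v = -v := by
      have : (2 : ℂ)⁻¹ • (v + W₁ v) = 0 := by
        simpa [ContinuousLinearMap.smul_apply, ContinuousLinearMap.add_apply,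
          ContinuousLinearMap.one_apply] using hF
      have h2 : v + W₁ v = 0 := by
        have := congrArg (fun y => (2 : ℂ) • y) this
        simpa [smul_smul] using this
      linear_combination (norm := module) h2
    have hkey : (W₁ - W₂) v = -(2 : ℂ) • v := by
      simp [ContinuousLinearMap.sub_apply, hW, hv']
      module
    have hle : ‖(W₁ - W₂) v‖ ≤ ‖v‖ := by
      calc ‖(W₁ - W₂) v‖ ≤ ‖W₁ - W₂‖ * ‖v‖ := (W₁ - W₂).le_opNorm v
        _ ≤ 1 * ‖v‖ := by
            exact mul_le_mul_of_nonneg_right hnorm (norm_nonneg _)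
        _ = ‖v‖ := one_mul _
    rw [hkey] at hle
    have h2v : (2 : ℝ) * ‖v‖ ≤ ‖v‖ := by
      simpa [norm_smul] using hle
    have : ‖v‖ ≤ 0 := by linarith
    simpa using norm_le_zero_iff.mp this
  · intro w hw
    have hw' : W₁ w = w := by
      have : (W₁ - 1) w = 0 := hw
      simpa [sub_eq_zero, ContinuousLinearMap.sub_apply] using this
    set N : H →L[ℂ] H := (4 : ℂ)⁻¹ • ((1 + W₁) * (W₂ - W₁)) with hN
    have hNfix : ∀ x : H, W₁ (N x) = N x := by
      intro x
      simp only [hN, ContinuousLinearMap.smul_apply, ContinuousLinearMap.mul_apply,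
        ContinuousLinearMap.add_apply, ContinuousLinearMap.one_apply,
        ContinuousLinearMap.map_smul, map_add, hW₁sq]
      module
    have hNapply : ∀ x : H, N x = (4 : ℂ)⁻¹ • (W₂ x - W₁ x + W₁ (W₂ x) - x) := by
      intro x
      simp only [hN, ContinuousLinearMap.smul_apply, ContinuousLinearMap.mul_apply,
        ContinuousLinearMap.add_apply, ContinuousLinearMap.one_apply,
        ContinuousLinearMap.sub_apply, map_sub, hW₁sq]
      module
    have hNnorm : ‖N‖ ≤ 1 / 2 := by
      refine ContinuousLinearMap.opNorm_le_bound N (by norm_num) (fun x => ?_)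
      have h1 : N x = (4 : ℂ)⁻¹ • ((W₂ - W₁) x + W₁ ((W₂ - W₁) x)) := by
        rw [hNapply]
        simp only [ContinuousLinearMap.sub_apply, map_sub, hW₁sq]
        module
      rw [h1, norm_smul]
      have h2 : ‖(W₂ - W₁) x + W₁ ((W₂ - W₁) x)‖ ≤ 2 * ‖(W₂ - W₁) x‖ := by
        calc ‖(W₂ - W₁) x + W₁ ((W₂ - W₁) x)‖
            ≤ ‖(W₂ - W₁) x‖ + ‖W₁ ((W₂ - W₁) x)‖ := norm_add_le _ _
          _ = 2 * ‖(W₂ - W₁) x‖ := by rw [hW₁iso]; ring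
      have h3 : ‖(W₂ - W₁) x‖ ≤ ‖x‖ := by
        calc ‖(W₂ - W₁) x‖ ≤ ‖W₂ - W₁‖ * ‖x‖ := (W₂ - W₁).le_opNorm x
          _ ≤ 1 * ‖x‖ := by
              refine mul_le_mul_of_nonneg_right ?_ (norm_nonneg _)
              rwa [norm_sub_rev]
          _ = ‖x‖ := one_mul _
      have h4 : ‖(4 : ℂ)⁻¹‖ = (4 : ℝ)⁻¹ := by norm_num
      rw [h4]
      nlinarith [norm_nonneg x]
    have hNlt : ‖-N‖ < 1 := by rw [norm_neg]; linarith
    set u : (H →L[ℂ] H)ˣ := Units.oneSub (-N) hNlt with hu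
    have huval : (u : H →L[ℂ] H) = 1 + N := by
      simp [hu, Units.oneSub, sub_neg_eq_add]
    set u0 : H := (↑u⁻¹ : H →L[ℂ] H) w with hu0
    have hTu0 : u0 + N u0 = w := by
      have h1 : ((u : H →L[ℂ] H) * (↑u⁻¹ : H →L[ℂ] H)) w = w := by
        rw [u.mul_inv]; simp
      rw [huval] at h1
      simpa [ContinuousLinearMap.mul_apply, ContinuousLinearMap.add_apply,
        ContinuousLinearMap.one_apply] using h1
    have hu0fix : W₁ u0 = u0 := by
      have h1 : u0 = w - N u0 := by
        have := hTu0; linear_combination (norm := module) this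
      rw [h1, map_sub, hw', hNfix]
    refine ⟨(2 : ℂ)⁻¹ • (u0 + W₂ u0), ?_, ?_⟩
    · have hW₂sq : ∀ x : H, W₂ (W₂ x) = x := by
        intro x
        have := congrArg (fun T : H →L[ℂ] H => T x) h₂inv
        simpa using this
      show (W₂ - 1) _ = 0
      simp only [ContinuousLinearMap.sub_apply, ContinuousLinearMap.one_apply,
        map_smul, map_add, hW₂sq]
      module
    · have hNu0 : N u0 = (4 : ℂ)⁻¹ • (W₂ u0 - u0 + W₁ (W₂ u0) - u0) := by
        rw [hNapply, hu0fix]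
      simp only [ContinuousLinearMap.smul_apply, ContinuousLinearMap.add_apply,
        ContinuousLinearMap.one_apply, map_smul, map_add, hu0fix]
      rw [← hTu0, hNu0]
      module
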